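/- arXiv:2201.10535 — 2 statements merged into one kernel-verified Lean document; each statement's English description precedes it below -/
import Mathlib

section
/- Let H be a separable complex Hilbert space with orthonormal basis (e_n)_{n≥0}, let D ∈ B(H) be the diagonal operator D e_n = α_n e_n with all α_n ≠ 0, and let f = Σ a_n e_n and g = Σ b_n e_n with a_n ≠ 0 and b_n ≠ 0 for all n. Set T = D + f⊗g. Then every basis vector e_n belongs to the range of T if and only if the sequence (a_n/α_n)_{n≥0} is square summable and 1 + Σ_{n≥0} a_n \overline{b_n}/α_n ≠ 0. -/
open ContinuousLinearMap
open scoped ComplexConjugate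

/-- The rank-one operator `f ⊗ g : h ↦ ⟨h, g⟩ f` (inner product linear in the
first argument, i.e. `⟪g, h⟫ • f` in Mathlib's convention). -/
noncomputable def rankOne {H : Type*} [NormedAddCommGroup H] [InnerProductSpace ℂ H]
    (f g : H) : H →L[ℂ] H :=
  (innerSL ℂ g).smulRight f

/-!
Since every `α_n ≠ 0`, `D` is injective, and `D y = f` is solvable (necessarily with
coordinates `a_n / α_n`) exactly when `(a_n / α_n)` is square summable; then
`⟪g, y⟫ = ∑ a_n conj b_n / α_n` by Parseval. For such `y`,
`(D + f ⊗ g) x = D (x + ⟪g, x⟫ • y)`, so `x = α_m⁻¹ e_m - c • y` is a preimage of `e_m`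
iff `c = ⟪g, x⟫`, i.e. `c (1 + ⟪g, y⟫) = conj b_m / α_m`, which is solvable in `c` iff
`1 + ⟪g, y⟫ ≠ 0` because `b_m ≠ 0`. Conversely, a preimage `x` of `e_0` has `⟪g, x⟫ ≠ 0`
(otherwise `x = α_0⁻¹ e_0` and `⟪g, x⟫ = conj b_0 / α_0`), and then
`y = ⟪g, x⟫⁻¹ • (α_0⁻¹ e_0 - x)` solves `D y = f`.
-/

open scoped InnerProductSpace

namespace HilbertBasis

variable {ι 𝕜 H : Type*} [RCLike 𝕜] [NormedAddCommGroup H] [InnerProductSpace 𝕜 H]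
  (e : HilbertBasis ι 𝕜 H)

theorem ext_inner {x y : H} (h : ∀ i, ⟪e i, x⟫_𝕜 = ⟪e i, y⟫_𝕜) : x = y :=
  e.repr.injective <| lp.ext <| funext fun i => by simp only [e.repr_apply_apply, h]

theorem exists_inner_eq_of_summable {c : ι → 𝕜} (hc : Summable fun i => ‖c i‖ ^ 2) :
    ∃ x, ∀ i, ⟪e i, x⟫_𝕜 = c i := by
  have hc : Memℓp c 2 := memℓp_gen (by simpa using hc)
  refine ⟨e.repr.symm ⟨c, hc⟩, fun i => ?_⟩
  rw [← e.repr_apply_apply, LinearIsometryEquiv.apply_symm_apply]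

variable {e} {α : ι → 𝕜} {D : H →L[𝕜] H}

theorem inner_apply_of_apply_eq_smul (hD : ∀ i, D (e i) = α i • e i) (i : ι) (x : H) :
    ⟪e i, D x⟫_𝕜 = α i * ⟪e i, x⟫_𝕜 := by
  suffices (innerSL 𝕜 (e i)).comp D = α i • innerSL 𝕜 (e i) from congrArg (· x) this
  refine ext_on (Submodule.dense_iff_topologicalClosure_eq_top.mpr e.dense_span) ?_
  rintro _ ⟨j, rfl⟩
  rcases eq_or_ne i j with rfl | hij
  · simp [hD]
  · simp [hD, e.orthonormal.inner_eq_zero hij]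

theorem inner_eq_div_of_apply_eq_smul (hα : ∀ i, α i ≠ 0) (hD : ∀ i, D (e i) = α i • e i)
    (i : ι) (x : H) : ⟪e i, x⟫_𝕜 = ⟪e i, D x⟫_𝕜 / α i := by
  rw [inner_apply_of_apply_eq_smul hD, mul_div_cancel_left₀ _ (hα i)]

theorem injective_of_apply_eq_smul (hα : ∀ i, α i ≠ 0) (hD : ∀ i, D (e i) = α i • e i) :
    Function.Injective D := fun x y hxy =>
  e.ext_inner fun i => by
    rw [inner_eq_div_of_apply_eq_smul hα hD i x, inner_eq_div_of_apply_eq_smul hα hD i y, hxy]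

theorem exists_apply_eq_iff_summable (hα : ∀ i, α i ≠ 0) (hD : ∀ i, D (e i) = α i • e i)
    (f : H) : (∃ y, D y = f) ↔ Summable fun i => ‖⟪e i, f⟫_𝕜 / α i‖ ^ 2 := by
  constructor
  · rintro ⟨y, rfl⟩
    refine (e.orthonormal.inner_products_summable y).congr fun i => ?_
    rw [inner_eq_div_of_apply_eq_smul hα hD i y]
  · intro hf
    obtain ⟨y, hy⟩ := e.exists_inner_eq_of_summable hf
    refine ⟨y, e.ext_inner fun i => ?_⟩
    rw [inner_apply_of_apply_eq_smul hD, hy, mul_div_cancel₀ _ (hα i)]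

theorem hasSum_inner_mul_conj_div (hα : ∀ i, α i ≠ 0) (hD : ∀ i, D (e i) = α i • e i)
    {f y : H} (hy : D y = f) (g : H) :
    HasSum (fun i => ⟪e i, f⟫_𝕜 * conj ⟪e i, g⟫_𝕜 / α i) ⟪g, y⟫_𝕜 := by
  convert e.hasSum_inner_mul_inner g y using 2 with i
  rw [inner_eq_div_of_apply_eq_smul hα hD i y, hy, inner_conj_symm]
  ring

end HilbertBasis

section RankOne

variable {H : Type*} [NormedAddCommGroup H] [InnerProductSpace ℂ H]

variable {D : H →L[ℂ] H} {f g u x y : H}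

theorem rankOne_apply (f g x : H) : rankOne f g x = ⟪g, x⟫_ℂ • f := rfl

theorem add_rankOne_apply_of_apply_eq (hy : D y = f) (g x : H) :
    (D + rankOne f g) x = D (x + ⟪g, x⟫_ℂ • y) := by
  rw [add_apply, rankOne_apply, map_add, map_smul, hy]

theorem mem_range_add_rankOne_of_apply_eq (hy : D y = f) (hS : 1 + ⟪g, y⟫_ℂ ≠ 0) :
    D u ∈ Set.range (D + rankOne f g) := by
  set c := ⟪g, u⟫_ℂ / (1 + ⟪g, y⟫_ℂ)
  have hc : ⟪g, u - c • y⟫_ℂ = c := by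
    rw [inner_sub_right, inner_smul_right]
    linear_combination -(div_mul_cancel₀ _ hS : c * (1 + ⟪g, y⟫_ℂ) = _)
  exact ⟨u - c • y, by rw [add_rankOne_apply_of_apply_eq hy, hc, sub_add_cancel]⟩

theorem exists_apply_eq_of_add_rankOne_apply_eq (hD : Function.Injective D)
    (hu : ⟪g, u⟫_ℂ ≠ 0) (hx : (D + rankOne f g) x = D u) : ∃ y, D y = f := by
  rw [add_apply, rankOne_apply] at hx
  have hc : ⟪g, x⟫_ℂ ≠ 0 := by
    intro hc
    rw [hc, zero_smul, add_zero] at hx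
    exact hu (hD hx ▸ hc)
  refine ⟨(⟪g, x⟫_ℂ)⁻¹ • (u - x), ?_⟩
  rw [map_smul, map_sub, ← hx, add_sub_cancel_left, smul_smul, inv_mul_cancel₀ hc, one_smul]

theorem one_add_inner_ne_zero_of_add_rankOne_apply_eq (hD : Function.Injective D)
    (hy : D y = f) (hu : ⟪g, u⟫_ℂ ≠ 0) (hx : (D + rankOne f g) x = D u) :
    1 + ⟪g, y⟫_ℂ ≠ 0 := by
  rw [add_rankOne_apply_of_apply_eq hy] at hx
  intro hS
  apply hu
  rw [← hD hx, inner_add_right, inner_smul_right]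
  linear_combination ⟪g, x⟫_ℂ * hS

end RankOne

open HilbertBasis

theorem basis_mem_range_diagonal_rankOne_iff_general
    {H : Type*} [NormedAddCommGroup H] [InnerProductSpace ℂ H]
    (e : HilbertBasis ℕ ℂ H) (α : ℕ → ℂ) (hα : ∀ n, α n ≠ 0)
    (D : H →L[ℂ] H) (hD : ∀ n, D (e n) = α n • e n)
    (f g : H)
    (hg : ∀ n, (inner ℂ (e n) g : ℂ) ≠ 0) :
    (∀ n, e n ∈ Set.range ⇑(D + rankOne f g)) ↔
      (Summable (fun n => ‖(inner ℂ (e n) f : ℂ) / α n‖ ^ 2)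
        ∧ 1 + ∑' n, (inner ℂ (e n) f : ℂ) * conj (inner ℂ (e n) g : ℂ) / α n ≠ 0) := by
  have hD_inv : ∀ m, D ((α m)⁻¹ • e m) = e m := fun m => by
    rw [map_smul, hD, smul_smul, inv_mul_cancel₀ (hα m), one_smul]
  have hg₀ : ⟪g, (α 0)⁻¹ • e 0⟫_ℂ ≠ 0 := by
    rw [inner_smul_right]
    exact mul_ne_zero (inv_ne_zero (hα 0)) (inner_eq_zero_symm.not.mp (hg 0))
  have hD_inj := injective_of_apply_eq_smul hα hD
  rw [← exists_apply_eq_iff_summable hα hD]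
  constructor
  · intro h
    obtain ⟨x, hx⟩ := h 0
    rw [← hD_inv 0] at hx
    obtain ⟨y, hy⟩ := exists_apply_eq_of_add_rankOne_apply_eq hD_inj hg₀ hx
    rw [(hasSum_inner_mul_conj_div hα hD hy g).tsum_eq]
    exact ⟨⟨y, hy⟩, one_add_inner_ne_zero_of_add_rankOne_apply_eq hD_inj hy hg₀ hx⟩
  · rintro ⟨⟨y, hy⟩, hS⟩ m
    rw [(hasSum_inner_mul_conj_div hα hD hy g).tsum_eq] at hS
    rw [← hD_inv m]
    exact mem_range_add_rankOne_of_apply_eq hy hS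

/-- **Proposition.** With `D` diagonal (nonzero entries `α_n`) and `f, g` with
nonzero Fourier coefficients `a_n = ⟨f, e_n⟩`, `b_n = ⟨g, e_n⟩`, every basis
vector `e_n` lies in the range of `T = D + f ⊗ g` iff `(a_n/α_n)` is square
summable and `1 + ∑ a_n conj(b_n)/α_n ≠ 0`. -/
theorem basis_mem_range_diagonal_rankOne_iff
    {H : Type*} [NormedAddCommGroup H] [InnerProductSpace ℂ H] [CompleteSpace H]
    (e : HilbertBasis ℕ ℂ H) (α : ℕ → ℂ) (hα : ∀ n, α n ≠ 0)
    (D : H →L[ℂ] H) (hD : ∀ n, D (e n) = α n • e n)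
    (f g : H)
    (hf : ∀ n, (inner ℂ (e n) f : ℂ) ≠ 0) (hg : ∀ n, (inner ℂ (e n) g : ℂ) ≠ 0) :
    (∀ n, e n ∈ Set.range ⇑(D + rankOne f g)) ↔
      (Summable (fun n => ‖(inner ℂ (e n) f : ℂ) / α n‖ ^ 2)
        ∧ 1 + ∑' n, (inner ℂ (e n) f : ℂ) * conj (inner ℂ (e n) g : ℂ) / α n ≠ 0) :=
  basis_mem_range_diagonal_rankOne_iff_general e α hα D hD f g hg
end

section
/- Let H be a separable complex Hilbert space with orthonormal basis (e_n)_{n≥0}, let D ∈ B(H) be the diagonal operator D e_n = α_n e_n with all α_n ≠ 0, and let f = Σ a_n e_n and g = Σ b_n e_n with a_n ≠ 0 and b_n ≠ 0 for all n. If T = D + f⊗g is bounded below (there exists ε > 0 with ‖Th‖ ≥ ε‖h‖ for all h ∈ H), then D is invertible in B(H); in particular, there exists M > 0 with |α_n| > M for all n. -/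
/-!
If `D + f ⊗ g` is bounded below by `ε`, testing it on `e n` gives
`ε ≤ |α n| + |⟨e n, g⟩| ‖f‖`. Bessel's inequality forces `⟨e n, g⟩ → 0`, so `|α n| > ε / 2`
for all large `n`, and since no `α n` vanishes, the `|α n|` are bounded below by some `M > 0`.
A diagonal operator with `|α n| ≥ M` is bounded below and its range contains every `e n`, hence
it is closed and dense, so `D` is bijective and therefore invertible.
-/

open ContinuousLinearMap

open Filter Topology

lemma rankOne_apply_s11 {H : Type*} [NormedAddCommGroup H] [InnerProductSpace ℂ H] (f g h : H) :
    rankOne f g h = inner ℂ g h • f :=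
  rfl

lemma exists_pos_forall_lt_of_eventually_lt {u : ℕ → ℝ} {c : ℝ} (hu : ∀ n, 0 < u n)
    (hc : 0 < c) (h : ∀ᶠ n in atTop, c < u n) : ∃ M > 0, ∀ n, M < u n := by
  obtain ⟨N, hN⟩ := eventually_atTop.1 h
  set m := (Finset.range (N + 1)).inf' Finset.nonempty_range_add_one u
  have hm : 0 < m := (Finset.lt_inf'_iff _).2 fun n _ => hu n
  refine ⟨min c m / 2, by positivity, fun n => ?_⟩
  have hmin : min c m ≤ u n := by
    rcases lt_or_ge n (N + 1) with hn | hn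
    · exact min_le_of_right_le (Finset.inf'_le _ (Finset.mem_range.2 hn))
    · exact min_le_of_left_le (hN n (by omega)).le
  linarith [lt_min hc hm]

lemma Orthonormal.tendsto_inner_cofinite_zero {𝕜 ι E : Type*} [RCLike 𝕜] [NormedAddCommGroup E]
    [InnerProductSpace 𝕜 E] {v : ι → E} (hv : Orthonormal 𝕜 v) (x : E) :
    Tendsto (fun i => inner 𝕜 (v i) x) cofinite (𝓝 0) := by
  rw [tendsto_zero_iff_norm_tendsto_zero]
  have hsq := hv.inner_products_summable (x := x) |>.tendsto_cofinite_zero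
  simpa [Real.sqrt_sq (norm_nonneg _)] using hsq.sqrt

lemma le_norm_add_of_boundedBelow_add_rankOne {H : Type*} [NormedAddCommGroup H]
    [InnerProductSpace ℂ H] {D : H →L[ℂ] H} {f g v : H} {a : ℂ} {ε : ℝ}
    (hT : ∀ h : H, ε * ‖h‖ ≤ ‖(D + rankOne f g) h‖) (hv : ‖v‖ = 1) (hDv : D v = a • v) :
    ε ≤ ‖a‖ + ‖inner ℂ v g‖ * ‖f‖ :=
  calc ε = ε * ‖v‖ := by rw [hv, mul_one]
    _ ≤ ‖a • v + inner ℂ g v • f‖ := by simpa [rankOne_apply_s11, hDv] using hT v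
    _ ≤ ‖a • v‖ + ‖inner ℂ g v • f‖ := norm_add_le _ _
    _ = ‖a‖ + ‖inner ℂ v g‖ * ‖f‖ := by rw [norm_smul, norm_smul, hv, mul_one, norm_inner_symm]

namespace HilbertBasis

variable {𝕜 ι H : Type*} [RCLike 𝕜] [NormedAddCommGroup H] [InnerProductSpace 𝕜 H]
  (e : HilbertBasis ι 𝕜 H) {D : H →L[𝕜] H} {α : ι → 𝕜}

lemma repr_apply_eq_mul_of_apply_eq_smul (hD : ∀ i, D (e i) = α i • e i) (x : H) (i : ι) :
    e.repr (D x) i = α i * e.repr x i := by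
  classical
  have hsum := (e.hasSum_repr x).mapL ((innerSL 𝕜 (e i)).comp D)
  have hterm : ∀ n, (innerSL 𝕜 (e i)).comp D (e.repr x n • e n) =
      if n = i then α i * e.repr x i else 0 := by
    intro n
    rw [comp_apply, map_smul, hD, innerSL_apply_apply, inner_smul_right, inner_smul_right,
      orthonormal_iff_ite.1 e.orthonormal]
    by_cases hn : n = i
    · subst hn; simp [mul_comm]
    · simp [hn, Ne.symm hn]
  simp only [hterm] at hsum
  rw [e.repr_apply_apply]
  exact hsum.unique (hasSum_ite_eq i _)

lemma mul_norm_le_norm_apply_of_apply_eq_smul (hD : ∀ i, D (e i) = α i • e i) {M : ℝ}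
    (hM : 0 ≤ M) (hMα : ∀ i, M ≤ ‖α i‖) (x : H) : M * ‖x‖ ≤ ‖D x‖ := by
  rw [← e.repr.norm_map x, ← e.repr.norm_map (D x)]
  have hpoint : ∀ i, ‖((M : 𝕜) • e.repr x) i‖ ≤ ‖e.repr (D x) i‖ := fun i => by
    rw [lp.coeFn_smul, Pi.smul_apply, norm_smul, e.repr_apply_eq_mul_of_apply_eq_smul hD,
      norm_mul, RCLike.norm_ofReal, abs_of_nonneg hM]
    exact mul_le_mul_of_nonneg_right (hMα i) (norm_nonneg _)
  calc M * ‖e.repr x‖ = ‖(M : 𝕜) • e.repr x‖ := by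
        rw [norm_smul, RCLike.norm_ofReal, abs_of_nonneg hM]
    _ ≤ ‖e.repr (D x)‖ := lp.norm_mono two_ne_zero hpoint

variable [CompleteSpace H]

lemma isUnit_of_apply_eq_smul (hD : ∀ i, D (e i) = α i • e i) {M : ℝ} (hM : 0 < M)
    (hMα : ∀ i, M ≤ ‖α i‖) : IsUnit D := by
  have hα : ∀ i, α i ≠ 0 := fun i => norm_pos_iff.1 (hM.trans_le (hMα i))
  have hdense : D.range.topologicalClosure = ⊤ := by
    refine eq_top_iff.2 (e.dense_span ▸ Submodule.topologicalClosure_mono ?_)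
    rw [Submodule.span_le]
    rintro _ ⟨n, rfl⟩
    refine ⟨(α n)⁻¹ • e n, ?_⟩
    rw [map_smul, coe_coe, hD, smul_smul, inv_mul_cancel₀ (hα n), one_smul]
  have hanti : AntilipschitzWith (Real.toNNReal M)⁻¹ D := D.antilipschitz_of_bound fun x => by
    rw [NNReal.coe_inv, Real.coe_toNNReal _ hM.le, inv_mul_eq_div, le_div_iff₀ hM, mul_comm]
    exact e.mul_norm_le_norm_apply_of_apply_eq_smul hD hM.le hMα x
  exact D.isUnit_iff_bijective.2 <|
    D.bijective_iff_dense_range_and_antilipschitz.2 ⟨hdense, _, hanti⟩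

end HilbertBasis

theorem diagonal_invertible_of_boundedBelow_general
    {H : Type*} [NormedAddCommGroup H] [InnerProductSpace ℂ H] [CompleteSpace H]
    (e : HilbertBasis ℕ ℂ H) (α : ℕ → ℂ) (hα : ∀ n, α n ≠ 0)
    (D : H →L[ℂ] H) (hD : ∀ n, D (e n) = α n • e n)
    (f g : H)
    (hbb : ∃ ε > 0, ∀ h : H, ε * ‖h‖ ≤ ‖(D + rankOne f g) h‖) :
    IsUnit D ∧ ∃ M > 0, ∀ n, M < ‖α n‖ := by
  obtain ⟨ε, hε, hT⟩ := hbb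
  have hlower : ∀ n, ε ≤ ‖α n‖ + ‖inner ℂ (e n) g‖ * ‖f‖ := fun n =>
    le_norm_add_of_boundedBelow_add_rankOne hT (e.orthonormal.1 n) (hD n)
  have hcoeff : Tendsto (fun n => ‖inner ℂ (e n) g‖ * ‖f‖) atTop (𝓝 0) := by
    have hg := Nat.cofinite_eq_atTop ▸ e.orthonormal.tendsto_inner_cofinite_zero g
    simpa using hg.norm.mul_const ‖f‖
  have htail : ∀ᶠ n in atTop, ε / 2 < ‖α n‖ :=
    (hcoeff.eventually_lt_const (half_pos hε)).mono fun n hn => by linarith [hlower n]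
  obtain ⟨M, hM, hMα⟩ :=
    exists_pos_forall_lt_of_eventually_lt (fun n => norm_pos_iff.2 (hα n)) (half_pos hε) htail
  exact ⟨e.isUnit_of_apply_eq_smul hD hM fun n => (hMα n).le, M, hM, hMα⟩

/-- **Lemma.** If `T = D + f ⊗ g` is bounded below (with `D` diagonal with
nonzero entries and `f, g` having nonzero Fourier coefficients), then `D` is
invertible in `B(H)`; in particular the diagonal entries are uniformly bounded
away from `0`. -/
theorem diagonal_invertible_of_boundedBelow
    {H : Type*} [NormedAddCommGroup H] [InnerProductSpace ℂ H] [CompleteSpace H]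
    (e : HilbertBasis ℕ ℂ H) (α : ℕ → ℂ) (hα : ∀ n, α n ≠ 0)
    (D : H →L[ℂ] H) (hD : ∀ n, D (e n) = α n • e n)
    (f g : H)
    (hf : ∀ n, (inner ℂ (e n) f : ℂ) ≠ 0) (hg : ∀ n, (inner ℂ (e n) g : ℂ) ≠ 0)
    (hbb : ∃ ε > 0, ∀ h : H, ε * ‖h‖ ≤ ‖(D + rankOne f g) h‖) :
    IsUnit D ∧ ∃ M > 0, ∀ n, M < ‖α n‖ :=
  diagonal_invertible_of_boundedBelow_general e α hα D hD f g hbb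
end
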